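/- arXiv:2205.03862 — 5 statements merged into one kernel-verified Lean document; each statement's English description precedes it below -/
import Mathlib

section
/- In a vertically integrated economy with one final good and linear production, if demand at stage 0 follows an AR(1) with persistence ρ and each stage n holds end-of-period inventories I_n(E_t D^n_{t+1}) for a differentiable function I_n, then output at stage n satisfies Y^n_t = D^0_t + Σ_{i=0}^n ΔF^i_t[D^0_t], where F^n_t is defined recursively by F^n_t[x_t] = I_n(E_t[x_{t+1} + Σ_{i=0}^{n-1}(F^i_{t+1}[x_{t+1}] − F^i_t[x_t])]) with F^0_t[x_t] = I_0(E_t[x_{t+1}]) and ΔF^n_t[x] = F^n_t[x_t] − F^n_{t−1}[x_{t−1}]. -/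
/-!
Market clearing makes stage `n + 1` face the output of stage `n`, i.e. stage `n`'s demand plus
the change in its inventory target. Inductively, stage `n` faces `D⁰` plus the inventory changes
`ΔFⁱ` of the stages `i < n` below it, and the inventory target of stage `n` evaluated on that
demand is exactly `Fⁿ`.
-/

namespace SupplyChain

open Finset

def stageDemand (x : ℤ → ℝ) (F : ℕ → ℤ → ℝ) (n : ℕ) (t : ℤ) : ℝ :=
  x t + ∑ i ∈ range n, (F i t - F i (t - 1))

variable {x : ℤ → ℝ} {F : ℕ → ℤ → ℝ} {Iv : ℕ → ℝ → ℝ} {Ex : ℤ → (ℤ → ℝ) → ℝ}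

@[simp]
theorem stageDemand_zero : stageDemand x F 0 = x := by
  funext t
  simp [stageDemand]

theorem stageDemand_succ (n : ℕ) (t : ℤ) :
    stageDemand x F (n + 1) t = stageDemand x F n t + (F n t - F n (t - 1)) := by
  simp only [stageDemand, sum_range_succ, add_assoc]

theorem apply_eq_stageDemand (hF0 : ∀ t, F 0 t = Iv 0 (Ex t x))
    (hF : ∀ n t, F (n + 1) t = Iv (n + 1) (Ex t (stageDemand x F (n + 1))))
    (n : ℕ) (t : ℤ) : F n t = Iv n (Ex t (stageDemand x F n)) := by
  cases n with
  | zero => rw [stageDemand_zero, hF0]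
  | succ n => exact hF n t

theorem demand_eq_stageDemand {D Y : ℕ → ℤ → ℝ}
    (hF : ∀ n t, F n t = Iv n (Ex t (stageDemand (D 0) F n)))
    (hY : ∀ n t, Y n t = D n t + Iv n (Ex t (D n)) - Iv n (Ex (t - 1) (D n)))
    (hMC : ∀ n t, D (n + 1) t = Y n t) (n : ℕ) : D n = stageDemand (D 0) F n := by
  induction n with
  | zero => rw [stageDemand_zero]
  | succ n ih =>
    funext t
    rw [hMC, hY, ih, stageDemand_succ, ← hF, ← hF, add_sub_assoc]

end SupplyChain

theorem vertically_integrated_sectoral_output_general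
    (D : ℕ → ℤ → ℝ)               -- D n t : demand faced by stage n at time t
    (Y : ℕ → ℤ → ℝ)               -- Y n t : output of stage n at time t
    (Iv : ℕ → ℝ → ℝ)              -- inventory target functions
    (Ex : ℤ → (ℤ → ℝ) → ℝ)        -- Ex t x = E_t [x_{t+1}]
    (F : ℕ → ℤ → ℝ)
    (hF0 : ∀ t, F 0 t = Iv 0 (Ex t (D 0)))
    (hF : ∀ n t, F (n + 1) t =
      Iv (n + 1) (Ex t (fun s => D 0 s +
        ∑ i ∈ Finset.range (n + 1), (F i s - F i (s - 1)))))
    -- stage-n output is demand plus the change in target inventories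
    (hY : ∀ n t, Y n t = D n t + Iv n (Ex t (D n)) - Iv n (Ex (t - 1) (D n)))
    -- market clearing: stage n output is the demand faced by stage n+1
    (hMC : ∀ n t, D (n + 1) t = Y n t) :
    ∀ n t, Y n t = D 0 t + ∑ i ∈ Finset.range (n + 1), (F i t - F i (t - 1)) := by
  intro n t
  have hF' := SupplyChain.apply_eq_stageDemand (x := D 0) hF0 hF
  rw [← hMC, SupplyChain.demand_eq_stageDemand hF' hY hMC]
  rfl

/-- In a vertically integrated economy with linear production,
AR(1) final demand, and inventory target functions `Iv n` applied to expected
future demand, stage-n output satisfies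
`Y^n_t = D^0_t + Σ_{i=0}^n (F^i_t − F^i_{t−1})` where `F` is the recursive
operator of the proposition (specialized to the argument `x = D^0`).
Here `Ex t x` denotes the conditional expectation `E_t[x_{t+1}]`. -/
theorem vertically_integrated_sectoral_output
    (D : ℕ → ℤ → ℝ)               -- D n t : demand faced by stage n at time t
    (Y : ℕ → ℤ → ℝ)               -- Y n t : output of stage n at time t
    (Iv : ℕ → ℝ → ℝ)              -- inventory target functions
    (hIdiff : ∀ n, Differentiable ℝ (Iv n))
    (Ex : ℤ → (ℤ → ℝ) → ℝ)        -- Ex t x = E_t [x_{t+1}]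
    (ρ Dbar : ℝ) (ε : ℤ → ℝ)
    (hρ : -1 < ρ ∧ ρ < 1)
    (hAR : ∀ t, D 0 t = (1 - ρ) * Dbar + ρ * D 0 (t - 1) + ε t)
    (F : ℕ → ℤ → ℝ)
    (hF0 : ∀ t, F 0 t = Iv 0 (Ex t (D 0)))
    (hF : ∀ n t, F (n + 1) t =
      Iv (n + 1) (Ex t (fun s => D 0 s +
        ∑ i ∈ Finset.range (n + 1), (F i s - F i (s - 1)))))
    -- stage-n output is demand plus the change in target inventories
    (hY : ∀ n t, Y n t = D n t + Iv n (Ex t (D n)) - Iv n (Ex (t - 1) (D n)))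
    -- market clearing: stage n output is the demand faced by stage n+1
    (hMC : ∀ n t, D (n + 1) t = Y n t) :
    ∀ n t, Y n t = D 0 t + ∑ i ∈ Finset.range (n + 1), (F i t - F i (t - 1)) :=
  vertically_integrated_sectoral_output_general D Y Iv Ex F hF0 hF hY hMC
end

section
/- In the network economy with inventory parameter α ≥ 0 and AR(1) demand persistence ρ with ω := 1 + α(ρ−1) ∈ [0,1], sectoral output of sector k satisfies Y_{k,t} = L̃_k B D_t + αρ [Σ_{n=0}^∞ Ã^n Σ_{i=0}^n ω^i]_k B Δ_t, where L̃ = (I−Ã)^{-1}, B is the vector of consumption shares, D_t is aggregate demand and Δ_t = D_t − D_{t−1}; this series exists and output is nonnegative for all α, ρ with α(ρ−1) ∈ [−1,0]. -/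
/-!
Under the column-sum condition every entry of `Ã ^ n` is at most `r ^ n` for some `r < 1`,
so `Σ Ã ^ n` converges to `(I - Ã)⁻¹` (the Neumann series), and `[Ã ^ n B]_k` decays
geometrically. Since `ω ∈ [0, 1]`, the weights `Σ_{i ≤ n} ω ^ i` grow at most linearly, so the
stage outputs are summable and the total splits into the Leontief term and the inventory term.
Each stage output is nonnegative, hence so is the total.
-/

open Finset Matrix

namespace Matrix

section OrderedSemiring

variable {ι R : Type*} [Fintype ι] [CommSemiring R] [PartialOrder R] [IsOrderedRing R]
  {A : Matrix ι ι R} {r : R}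

theorem sum_mul_apply_le {M : Matrix ι ι R} {s : R} (hM : ∀ i j, 0 ≤ M i j)
    (hr : ∀ j, ∑ i, A i j ≤ r) (hs : ∀ j, ∑ i, M i j ≤ s) (hr0 : 0 ≤ r) (l : ι) :
    ∑ i, (A * M) i l ≤ r * s :=
  calc ∑ i, (A * M) i l = ∑ j, (∑ i, A i j) * M j l := by
        simp only [mul_apply, Finset.sum_mul]; exact Finset.sum_comm
    _ ≤ ∑ j, r * M j l := by gcongr with j; exacts [hM j l, hr j]
    _ = r * ∑ j, M j l := (Finset.mul_sum ..).symm
    _ ≤ r * s := by gcongr; exact hs l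

variable [DecidableEq ι]

theorem sum_pow_apply_le (hA : ∀ i j, 0 ≤ A i j) (hr : ∀ j, ∑ i, A i j ≤ r) (hr0 : 0 ≤ r)
    (n : ℕ) (j : ι) : ∑ i, (A ^ n) i j ≤ r ^ n := by
  induction n generalizing j with
  | zero => simp [one_apply]
  | succ n ih =>
    rw [pow_succ', pow_succ']
    exact sum_mul_apply_le (pow_apply_nonneg hA n) hr ih hr0 j

theorem pow_apply_le (hA : ∀ i j, 0 ≤ A i j) (hr : ∀ j, ∑ i, A i j ≤ r) (hr0 : 0 ≤ r)
    (n : ℕ) (i j : ι) : (A ^ n) i j ≤ r ^ n :=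
  (Finset.single_le_sum (fun l _ => pow_apply_nonneg hA n l j) (Finset.mem_univ i)).trans
    (sum_pow_apply_le hA hr hr0 n j)

theorem pow_mulVec_apply_nonneg (hA : ∀ i j, 0 ≤ A i j) {v : ι → R} (hv : ∀ j, 0 ≤ v j)
    (n : ℕ) (i : ι) : 0 ≤ (A ^ n *ᵥ v) i :=
  Finset.sum_nonneg fun j _ => mul_nonneg (pow_apply_nonneg hA n i j) (hv j)

theorem pow_mulVec_apply_le (hA : ∀ i j, 0 ≤ A i j) (hr : ∀ j, ∑ i, A i j ≤ r) (hr0 : 0 ≤ r)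
    {v : ι → R} (hv : ∀ j, 0 ≤ v j) (n : ℕ) (i : ι) : (A ^ n *ᵥ v) i ≤ r ^ n * ∑ j, v j :=
  calc (A ^ n *ᵥ v) i = ∑ j, (A ^ n) i j * v j := rfl
    _ ≤ ∑ j, r ^ n * v j := by gcongr with j; exacts [hv j, pow_apply_le hA hr hr0 n i j]
    _ = r ^ n * ∑ j, v j := (Finset.mul_sum ..).symm

end OrderedSemiring

variable {ι : Type*} [Fintype ι] [DecidableEq ι] {A : Matrix ι ι ℝ} {r : ℝ}

theorem summable_pow (hA : ∀ i j, 0 ≤ A i j) (hr : ∀ j, ∑ i, A i j ≤ r) (hr0 : 0 ≤ r)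
    (hr1 : r < 1) : Summable (A ^ ·) :=
  Pi.summable.2 fun i => Pi.summable.2 fun j =>
    (summable_geometric_of_lt_one hr0 hr1).of_nonneg_of_le (pow_apply_nonneg hA · i j)
      (pow_apply_le hA hr hr0 · i j)

theorem hasSum_pow_inv_one_sub (hA : ∀ i j, 0 ≤ A i j) (hr : ∀ j, ∑ i, A i j ≤ r)
    (hr0 : 0 ≤ r) (hr1 : r < 1) : HasSum (A ^ ·) (1 - A)⁻¹ := by
  have hsum := summable_pow hA hr hr0 hr1
  rw [inv_eq_right_inv hsum.one_sub_mul_tsum_pow]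
  exact hsum.hasSum

end Matrix

theorem HasSum.matrix_mulVec {κ m n R : Type*} [Fintype n] [Semiring R] [TopologicalSpace R]
    [IsTopologicalSemiring R] {M : κ → Matrix m n R} {S : Matrix m n R} (h : HasSum M S)
    (v : n → R) : HasSum (fun c => M c *ᵥ v) (S *ᵥ v) :=
  h.map (mulVec.addMonoidHomLeft v) (continuous_id.matrix_mulVec continuous_const)

theorem abs_geom_sum_le {x : ℝ} (hx : |x| ≤ 1) (n : ℕ) : |∑ i ∈ range n, x ^ i| ≤ n :=
  calc |∑ i ∈ range n, x ^ i| ≤ ∑ i ∈ range n, |x ^ i| := abs_sum_le_sum_abs _ _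
    _ ≤ ∑ _i ∈ range n, (1 : ℝ) := by
        gcongr with i; rw [abs_pow]; exact pow_le_one₀ (abs_nonneg x) hx
    _ = n := by simp

theorem summable_mul_of_abs_le_succ_of_abs_le_geometric {s f : ℕ → ℝ} {C r : ℝ} (hr0 : 0 ≤ r)
    (hr1 : r < 1) (hs : ∀ n, |s n| ≤ n + 1) (hf : ∀ n, |f n| ≤ C * r ^ n) :
    Summable fun n => s n * f n := by
  have hlin : Summable fun n : ℕ => ((n : ℝ) + 1) * (C * r ^ n) := by
    have hnr := summable_pow_mul_geometric_of_norm_lt_one 1 (r := r)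
      (by rwa [Real.norm_of_nonneg hr0])
    exact ((hnr.add (summable_geometric_of_lt_one hr0 hr1)).mul_right C).congr fun n => by ring
  refine Summable.of_norm_bounded hlin fun n => ?_
  rw [Real.norm_eq_abs, abs_mul]
  exact mul_le_mul (hs n) (hf n) (abs_nonneg _) (by positivity)

theorem network_sectoral_output_general
    {S : ℕ} (A : Matrix (Fin S) (Fin S) ℝ)
    (hA0 : ∀ k l, 0 ≤ A k l) (hBS : ∀ s, ∑ k, A k s < 1)
    (B : Fin S → ℝ) (hB : ∀ s, 0 ≤ B s)
    (α ρ : ℝ)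
    (hrange : α * (ρ - 1) ∈ Set.Icc (-1 : ℝ) 0)
    (ω : ℝ) (hω : ω = 1 + α * (ρ - 1))
    (D : ℤ → ℝ)
    (Yn : ℕ → Fin S → ℤ → ℝ)
    (hYn : ∀ n k t, Yn n k t = ((A ^ n).mulVec B) k *
      (D t + α * ρ * (∑ i ∈ Finset.range (n + 1), ω ^ i) * (D t - D (t - 1))))
    -- demand fluctuations are small enough that each stage term is nonnegative
    (hstage : ∀ n t,
      0 ≤ D t + α * ρ * (∑ i ∈ Finset.range (n + 1), ω ^ i) * (D t - D (t - 1)))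
    (Y : Fin S → ℤ → ℝ)
    (hY : ∀ k t, Y k t = ∑' n : ℕ, Yn n k t) :
    ∀ k t,
      Summable (fun n : ℕ => Yn n k t) ∧
      Y k t = ((1 - A)⁻¹.mulVec B) k * D t +
        α * ρ * (∑' n : ℕ,
          (∑ i ∈ Finset.range (n + 1), ω ^ i) * ((A ^ n).mulVec B) k)
          * (D t - D (t - 1)) ∧
      0 ≤ Y k t := by
  intro k t
  have : Nonempty (Fin S) := ⟨k⟩
  obtain ⟨l, hcol⟩ := Finite.exists_max fun s => ∑ i, A i s
  have hr0 : 0 ≤ ∑ i, A i l := Finset.sum_nonneg fun i _ => hA0 i l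
  have hω1 : |ω| ≤ 1 := abs_le.2 ⟨by linarith [hrange.1], by linarith [hrange.2]⟩
  have hf : HasSum (fun n => (A ^ n *ᵥ B) k) (((1 - A)⁻¹ *ᵥ B) k) :=
    Pi.hasSum.1 ((hasSum_pow_inv_one_sub hA0 hcol hr0 (hBS l)).matrix_mulVec B) k
  have hsf : Summable fun n => (∑ i ∈ range (n + 1), ω ^ i) * (A ^ n *ᵥ B) k := by
    refine summable_mul_of_abs_le_succ_of_abs_le_geometric (C := ∑ j, B j) hr0 (hBS l)
      (fun n => by exact_mod_cast abs_geom_sum_le hω1 (n + 1)) fun n => ?_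
    rw [abs_of_nonneg (pow_mulVec_apply_nonneg hA0 hB n k), mul_comm]
    exact pow_mulVec_apply_le hA0 hcol hr0 hB n k
  have hY_sum : HasSum (fun n => Yn n k t) (((1 - A)⁻¹ *ᵥ B) k * D t +
      α * ρ * (D t - D (t - 1)) *
        ∑' n, (∑ i ∈ range (n + 1), ω ^ i) * (A ^ n *ᵥ B) k) := by
    have hYn' : (fun n => Yn n k t) = fun n => (A ^ n *ᵥ B) k * D t +
        α * ρ * (D t - D (t - 1)) * ((∑ i ∈ range (n + 1), ω ^ i) * (A ^ n *ᵥ B) k) :=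
      funext fun n => by rw [hYn]; ring
    rw [hYn']
    exact (hf.mul_right (D t)).add (hsf.hasSum.mul_left (α * ρ * (D t - D (t - 1))))
  refine ⟨hY_sum.summable, by rw [hY, hY_sum.tsum_eq]; ring, ?_⟩
  rw [hY]
  exact tsum_nonneg fun n =>
    hYn n k t ▸ mul_nonneg (pow_mulVec_apply_nonneg hA0 hB n k) (hstage n t)

/-- In the network economy with inventory parameter `α ≥ 0`,
AR(1) persistence `ρ`, `ω = 1 + α(ρ−1) ∈ [0,1]`, and stage-n output
`Y^n_{k,t} = [Ã^n B]_k (D_t + αρ Σ_{i≤n} ω^i Δ_t)`, total sectoral output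
`Y_{k,t} = Σ_n Y^n_{k,t}` exists (the series is summable), equals
`L̃_k B D_t + αρ [Σ_n Ã^n Σ_{i≤n} ω^i]_k B Δ_t` with `L̃ = (I−Ã)⁻¹`, and is
nonnegative. -/
theorem network_sectoral_output
    {S : ℕ} (A : Matrix (Fin S) (Fin S) ℝ)
    (hA0 : ∀ k l, 0 ≤ A k l) (hBS : ∀ s, ∑ k, A k s < 1)
    (B : Fin S → ℝ) (hB : ∀ s, 0 ≤ B s)
    (α ρ : ℝ) (hα : 0 ≤ α)
    (hrange : α * (ρ - 1) ∈ Set.Icc (-1 : ℝ) 0)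
    (ω : ℝ) (hω : ω = 1 + α * (ρ - 1))
    (D : ℤ → ℝ)
    (Yn : ℕ → Fin S → ℤ → ℝ)
    (hYn : ∀ n k t, Yn n k t = ((A ^ n).mulVec B) k *
      (D t + α * ρ * (∑ i ∈ Finset.range (n + 1), ω ^ i) * (D t - D (t - 1))))
    -- demand fluctuations are small enough that each stage term is nonnegative
    (hstage : ∀ n t,
      0 ≤ D t + α * ρ * (∑ i ∈ Finset.range (n + 1), ω ^ i) * (D t - D (t - 1)))
    (Y : Fin S → ℤ → ℝ)
    (hY : ∀ k t, Y k t = ∑' n : ℕ, Yn n k t) :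
    ∀ k t,
      Summable (fun n : ℕ => Yn n k t) ∧
      Y k t = ((1 - A)⁻¹.mulVec B) k * D t +
        α * ρ * (∑' n : ℕ,
          (∑ i ∈ Finset.range (n + 1), ω ^ i) * ((A ^ n).mulVec B) k)
          * (D t - D (t - 1)) ∧
      0 ≤ Y k t :=
  network_sectoral_output_general A hA0 hBS B hB α ρ hrange ω hω D Yn hYn hstage Y hY
end

section
/- As ρ → 1 (permanent demand shocks), ω = 1 + α(ρ−1) → 1 and the inventory-weighted upstreamness 𝒰_k converges to the standard upstreamness U_k = [(I−Ã)^{-2}B]_k / [(I−Ã)^{-1}B]_k, so output growth satisfies ΔY_{k,t}/Y_k ≈ (Δ_t/D̄)(1 + α U_k). -/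
open Filter Set Topology

set_option maxHeartbeats 1000000

/-- As `ρ → 1` (permanent demand shocks), `ω = 1 + α(ρ−1) → 1`
and inventory-weighted upstreamness `𝒰_k(ω)` converges to standard
upstreamness `U_k = [(I−Ã)⁻² B]_k / [(I−Ã)⁻¹ B]_k`, so output growth
converges to `(Δ/D̄)(1 + α U_k)`. -/
theorem permanent_shocks_limit_upstreamness
    {S : ℕ} (A : Matrix (Fin S) (Fin S) ℝ)
    (hA0 : ∀ k l, 0 ≤ A k l) (hBS : ∀ s, ∑ k, A k s < 1)
    (B : Fin S → ℝ) (hB : ∀ s, 0 ≤ B s)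
    (hden : ∀ k, 0 < ((1 - A)⁻¹.mulVec B) k)
    (U : ℝ → Fin S → ℝ)
    (hU : ∀ ω k, U ω k =
      (∑' n : ℕ, ((1 - ω ^ (n + 1)) / (1 - ω)) * ((A ^ n).mulVec B) k) /
        ((1 - A)⁻¹.mulVec B) k)
    (Ustd : Fin S → ℝ)
    (hUstd : ∀ k, Ustd k =
      (((1 - A)⁻¹ ^ 2).mulVec B) k / ((1 - A)⁻¹.mulVec B) k)
    (α g : ℝ) (hα : 0 < α) (hα1 : α ≤ 1) :
    (∀ k, Filter.Tendsto (fun ω => U ω k)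
        (nhdsWithin 1 (Set.Iio 1)) (nhds (Ustd k))) ∧
    (∀ k, Filter.Tendsto (fun ρ => g * (1 + α * ρ * U (1 + α * (ρ - 1)) k))
        (nhdsWithin 1 (Set.Iio 1)) (nhds (g * (1 + α * Ustd k)))) := by
  rcases Nat.eq_zero_or_pos S with hS | hS
  · subst hS
    exact ⟨fun k => k.elim0, fun k => k.elim0⟩
  have hne : Nonempty (Fin S) := ⟨⟨0, hS⟩⟩
  -- the maximal column sum `c`
  set c : ℝ := Finset.univ.sup' Finset.univ_nonempty (fun s => ∑ k, A k s) with hc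
  have hc1 : c < 1 := by
    rw [hc, Finset.sup'_lt_iff]
    intro s _
    exact hBS s
  have hcol : ∀ s, ∑ k, A k s ≤ c := fun s =>
    Finset.le_sup' (fun s => ∑ k, A k s) (Finset.mem_univ s)
  have hc0 : 0 ≤ c := by
    have h0 : (0:ℝ) ≤ ∑ k, A k (⟨0, hS⟩ : Fin S) :=
      Finset.sum_nonneg fun k _ => hA0 k _
    exact le_trans h0 (hcol _)
  -- nonnegativity of powers
  have hP0 : ∀ n, ∀ k l, 0 ≤ (A ^ n) k l := by
    intro n
    induction n with
    | zero => intro k l; rw [pow_zero, Matrix.one_apply]; positivity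
    | succ n ih =>
      intro k l
      rw [pow_succ, Matrix.mul_apply]
      exact Finset.sum_nonneg fun m _ => mul_nonneg (ih k m) (hA0 m l)
  -- column sums of powers
  have hPcol : ∀ n, ∀ s, ∑ k, (A ^ n) k s ≤ c ^ n := by
    intro n
    induction n with
    | zero => intro s; simp [Matrix.one_apply]
    | succ n ih =>
      intro s
      rw [pow_succ]
      calc ∑ k, (A ^ n * A) k s = ∑ m, (∑ k, (A ^ n) k m) * A m s := by
            simp_rw [Matrix.mul_apply]
            rw [Finset.sum_comm]
            simp [Finset.sum_mul]
        _ ≤ ∑ m, c ^ n * A m s :=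
            Finset.sum_le_sum fun m _ => mul_le_mul_of_nonneg_right (ih m) (hA0 m s)
        _ = c ^ n * ∑ m, A m s := by rw [Finset.mul_sum]
        _ ≤ c ^ n * c := mul_le_mul_of_nonneg_left (hcol s) (pow_nonneg hc0 n)
        _ = c ^ (n + 1) := (pow_succ c n).symm
  have hPent : ∀ n, ∀ k l, (A ^ n) k l ≤ c ^ n := fun n k l =>
    le_trans (Finset.single_le_sum (f := fun i => (A ^ n) i l)
      (fun i _ => hP0 n i l) (Finset.mem_univ k)) (hPcol n l)
  -- entrywise summability
  have hsumP : ∀ k l, Summable (fun n => (A ^ n) k l) := by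
    intro k l
    refine Summable.of_nonneg_of_le (fun n => hP0 n k l) (fun n => hPent n k l) ?_
    exact summable_geometric_of_lt_one hc0 hc1
  have hsumgeom : Summable (fun n : ℕ => ((n : ℝ) + 1) * c ^ n) := by
    have h1 : Summable (fun n : ℕ => (n : ℝ) * c ^ n) := by
      have := summable_pow_mul_geometric_of_norm_lt_one (R := ℝ) 1
        (r := c) (by rw [Real.norm_eq_abs, abs_of_nonneg hc0]; exact hc1)
      simpa using this
    have h2 : Summable (fun n : ℕ => c ^ n) := summable_geometric_of_lt_one hc0 hc1
    simpa [add_mul] using h1.add h2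
  have hsumP2 : ∀ k l, Summable (fun n : ℕ => ((n : ℝ) + 1) * (A ^ n) k l) := by
    intro k l
    refine Summable.of_nonneg_of_le
      (fun n => mul_nonneg (by positivity) (hP0 n k l)) (fun n => ?_) hsumgeom
    exact mul_le_mul_of_nonneg_left (hPent n k l) (by positivity)
  -- the matrices T = ∑ Aⁿ and T2 = ∑ (n+1)Aⁿ
  set T : Matrix (Fin S) (Fin S) ℝ := Matrix.of (fun k l => ∑' n : ℕ, (A ^ n) k l) with hT
  set T2 : Matrix (Fin S) (Fin S) ℝ :=
    Matrix.of (fun k l => ∑' n : ℕ, ((n : ℝ) + 1) * (A ^ n) k l) with hT2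
  have hTapp : ∀ k l, T k l = ∑' n : ℕ, (A ^ n) k l := fun k l => rfl
  have hT2app : ∀ k l, T2 k l = ∑' n : ℕ, ((n : ℝ) + 1) * (A ^ n) k l := fun k l => rfl
  -- (A * T) k l = ∑' (A^(n+1)) k l
  have hAT : ∀ k l, (A * T) k l = ∑' n : ℕ, (A ^ (n + 1)) k l := by
    intro k l
    rw [Matrix.mul_apply]
    have : ∀ m, A k m * T m l = ∑' n : ℕ, A k m * (A ^ n) m l := fun m =>
      ((hsumP m l).tsum_mul_left (A k m)).symm
    simp_rw [this]
    rw [← Summable.tsum_finsetSum (fun m _ => (hsumP m l).mul_left (A k m))]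
    exact tsum_congr fun n => by rw [pow_succ', Matrix.mul_apply]
  have hT1 : (1 - A) * T = 1 := by
    ext k l
    rw [sub_mul, one_mul, Matrix.sub_apply, hAT, hTapp]
    rw [Summable.tsum_eq_zero_add (hsumP k l)]
    simp [Matrix.one_apply]
  have hTA : T * (1 - A) = 1 := by
    ext k l
    rw [Matrix.mul_sub, Matrix.mul_one, Matrix.sub_apply, hTapp]
    have hTAapp : (T * A) k l = ∑' n : ℕ, (A ^ (n + 1)) k l := by
      rw [Matrix.mul_apply]
      have : ∀ m, T k m * A m l = ∑' n : ℕ, (A ^ n) k m * A m l := fun m =>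
        ((hsumP k m).tsum_mul_right (A m l)).symm
      simp_rw [this]
      rw [← Summable.tsum_finsetSum (fun m _ => (hsumP k m).mul_right (A m l))]
      exact tsum_congr fun n => by rw [pow_succ, Matrix.mul_apply]
    rw [hTAapp, Summable.tsum_eq_zero_add (hsumP k l)]
    simp [Matrix.one_apply]
  have hTinv : (1 - A)⁻¹ = T := Matrix.inv_eq_right_inv hT1
  -- (1 - A) * T2 = T
  have hAT2 : ∀ k l, (A * T2) k l = ∑' n : ℕ, ((n : ℝ) + 1) * (A ^ (n + 1)) k l := by
    intro k l
    rw [Matrix.mul_apply]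
    have : ∀ m, A k m * T2 m l = ∑' n : ℕ, A k m * (((n : ℝ) + 1) * (A ^ n) m l) :=
      fun m => ((hsumP2 m l).tsum_mul_left (A k m)).symm
    simp_rw [this]
    rw [← Summable.tsum_finsetSum (fun m _ => (hsumP2 m l).mul_left (A k m))]
    refine tsum_congr fun n => ?_
    rw [pow_succ', Matrix.mul_apply, Finset.mul_sum]
    exact Finset.sum_congr rfl fun m _ => by ring
  have hT2eqn : (1 - A) * T2 = T := by
    ext k l
    rw [sub_mul, one_mul, Matrix.sub_apply, hAT2, hT2app, hTapp]
    have hshift : Summable (fun n : ℕ => ((n : ℝ) + 1) * (A ^ (n + 1)) k l) := by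
      have := (summable_nat_add_iff 1).2 (hsumP2 k l)
      refine this.of_nonneg_of_le
        (fun n => mul_nonneg (by positivity) (hP0 (n + 1) k l)) (fun n => ?_)
      refine mul_le_mul_of_nonneg_right ?_ (hP0 (n + 1) k l)
      push_cast; linarith
    have hs2 : Summable (fun n : ℕ => (((n + 1 : ℕ) : ℝ) + 1) * (A ^ (n + 1)) k l) :=
      (summable_nat_add_iff (f := fun n : ℕ => ((n : ℝ) + 1) * (A ^ n) k l) 1).2 (hsumP2 k l)
    have hs1 : Summable (fun n : ℕ => (A ^ (n + 1)) k l) :=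
      (summable_nat_add_iff (f := fun n : ℕ => (A ^ n) k l) 1).2 (hsumP k l)
    have e1 : ∑' n : ℕ, ((n : ℝ) + 1) * (A ^ (n + 1)) k l
        = (∑' n : ℕ, (((n + 1 : ℕ) : ℝ) + 1) * (A ^ (n + 1)) k l)
          - ∑' n : ℕ, (A ^ (n + 1)) k l := by
      rw [← Summable.tsum_sub hs2 hs1]
      exact tsum_congr fun n => by push_cast; ring
    rw [e1, Summable.tsum_eq_zero_add (hsumP2 k l), Summable.tsum_eq_zero_add (hsumP k l)]
    push_cast
    ring
  have hT2sq : (1 - A)⁻¹ ^ 2 = T2 := by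
    have : T2 = T * T := by
      calc T2 = (T * (1 - A)) * T2 := by rw [hTA, one_mul]
        _ = T * ((1 - A) * T2) := by rw [mul_assoc]
        _ = T * T := by rw [hT2eqn]
    rw [hTinv, pow_two, this]
  -- mulVec identities
  set v : ℕ → Fin S → ℝ := fun n k => (A ^ n).mulVec B k with hv
  have hvapp : ∀ n k, v n k = ∑ l, (A ^ n) k l * B l := by
    intro n k
    simp [hv, Matrix.mulVec, dotProduct]
  have hv0 : ∀ n k, 0 ≤ v n k := fun n k => by
    rw [hvapp]
    exact Finset.sum_nonneg fun l _ => mul_nonneg (hP0 n k l) (hB l)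
  have hsumv : ∀ k, Summable (fun n => v n k) := by
    intro k
    simp_rw [hvapp]
    exact summable_sum fun l _ => (hsumP k l).mul_right (B l)
  have hsumnv : ∀ k, Summable (fun n : ℕ => ((n : ℝ) + 1) * v n k) := by
    intro k
    have : ∀ n : ℕ, ((n : ℝ) + 1) * v n k = ∑ l, (((n : ℝ) + 1) * (A ^ n) k l) * B l := by
      intro n
      rw [hvapp, Finset.mul_sum]
      exact Finset.sum_congr rfl fun l _ => by ring
    simp_rw [this]
    exact summable_sum fun l _ => (hsumP2 k l).mul_right (B l)
  have hden1 : ∀ k, ((1 - A)⁻¹.mulVec B) k = ∑' n : ℕ, v n k := by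
    intro k
    rw [hTinv]
    have : T.mulVec B k = ∑ l, (∑' n : ℕ, (A ^ n) k l) * B l := by
      simp [Matrix.mulVec, dotProduct, hTapp]
    rw [this]
    have : ∀ l, (∑' n : ℕ, (A ^ n) k l) * B l = ∑' n : ℕ, (A ^ n) k l * B l := fun l =>
      ((hsumP k l).tsum_mul_right (B l)).symm
    simp_rw [this]
    rw [← Summable.tsum_finsetSum (fun l _ => (hsumP k l).mul_right (B l))]
    exact tsum_congr fun n => (hvapp n k).symm
  have hnum : ∀ k, (((1 - A)⁻¹ ^ 2).mulVec B) k = ∑' n : ℕ, ((n : ℝ) + 1) * v n k := by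
    intro k
    rw [hT2sq]
    have h1 : T2.mulVec B k = ∑ l, (∑' n : ℕ, ((n : ℝ) + 1) * (A ^ n) k l) * B l := by
      simp [Matrix.mulVec, dotProduct, hT2app]
    rw [h1]
    have : ∀ l, (∑' n : ℕ, ((n : ℝ) + 1) * (A ^ n) k l) * B l
        = ∑' n : ℕ, (((n : ℝ) + 1) * (A ^ n) k l) * B l := fun l =>
      ((hsumP2 k l).tsum_mul_right (B l)).symm
    simp_rw [this]
    rw [← Summable.tsum_finsetSum (fun l _ => (hsumP2 k l).mul_right (B l))]
    refine tsum_congr fun n => ?_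
    rw [hvapp, Finset.mul_sum]
    exact Finset.sum_congr rfl fun l _ => by ring
  -- Part 1
  have part1 : ∀ k, Tendsto (fun ω => U ω k) (𝓝[<] (1:ℝ)) (𝓝 (Ustd k)) := by
    intro k
    have hd := hden k
    have key : Tendsto (fun ω : ℝ => ∑' n : ℕ, ((1 - ω ^ (n + 1)) / (1 - ω)) * v n k)
        (𝓝[<] (1:ℝ)) (𝓝 (∑' n : ℕ, ((n : ℝ) + 1) * v n k)) := by
      refine tendsto_tsum_of_dominated_convergence (bound := fun n => ((n : ℝ) + 1) * v n k)
        (hsumnv k) ?_ ?_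
      · intro n
        have heq : ∀ᶠ ω in 𝓝[<] (1:ℝ),
            (∑ i ∈ Finset.range (n + 1), ω ^ i) * v n k
              = ((1 - ω ^ (n + 1)) / (1 - ω)) * v n k := by
          filter_upwards [self_mem_nhdsWithin] with ω (hω : ω < 1)
          rw [geom_sum_eq (ne_of_lt hω)]
          congr 1
          rw [div_eq_div_iff (sub_ne_zero.2 (ne_of_lt hω)) (sub_ne_zero.2 (ne_of_gt hω))]
          ring
        refine Tendsto.congr' heq ?_
        have hcont : Tendsto (fun ω : ℝ => (∑ i ∈ Finset.range (n + 1), ω ^ i) * v n k)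
            (𝓝 (1:ℝ)) (𝓝 ((∑ i ∈ Finset.range (n + 1), (1:ℝ) ^ i) * v n k)) := by
          exact (Continuous.mul (continuous_finset_sum _ fun i _ => continuous_pow i)
            continuous_const).tendsto 1
        have : (∑ i ∈ Finset.range (n + 1), (1:ℝ) ^ i) = (n : ℝ) + 1 := by
          simp
        rw [this] at hcont
        exact hcont.mono_left nhdsWithin_le_nhds
      · have hIoo : Ioo (0:ℝ) 1 ∈ 𝓝[<] (1:ℝ) := Ioo_mem_nhdsLT_of_mem ⟨zero_lt_one, le_refl 1⟩
        filter_upwards [hIoo] with ω hω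
        intro n
        have hω0 := hω.1
        have hω1 := hω.2
        have hgs : (1 - ω ^ (n + 1)) / (1 - ω) = ∑ i ∈ Finset.range (n + 1), ω ^ i := by
          rw [geom_sum_eq (ne_of_lt hω1)]
          rw [div_eq_div_iff (sub_ne_zero.2 (ne_of_gt hω1)) (sub_ne_zero.2 (ne_of_lt hω1))]
          ring
        have h0 : (0:ℝ) ≤ ∑ i ∈ Finset.range (n + 1), ω ^ i :=
          Finset.sum_nonneg fun i _ => pow_nonneg hω0.le i
        have hle : ∑ i ∈ Finset.range (n + 1), ω ^ i ≤ (n : ℝ) + 1 := by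
          calc ∑ i ∈ Finset.range (n + 1), ω ^ i ≤ ∑ i ∈ Finset.range (n + 1), (1:ℝ) :=
                Finset.sum_le_sum fun i _ => pow_le_one₀ hω0.le hω1.le
            _ = (n : ℝ) + 1 := by simp
        rw [hgs, Real.norm_eq_abs, abs_mul, abs_of_nonneg h0, abs_of_nonneg (hv0 n k)]
        exact mul_le_mul_of_nonneg_right hle (hv0 n k)
    have : (fun ω => U ω k)
        = fun ω => (∑' n : ℕ, ((1 - ω ^ (n + 1)) / (1 - ω)) * v n k)
            / ((1 - A)⁻¹.mulVec B) k := by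
      funext ω; exact hU ω k
    rw [this, hUstd k, hnum k]
    exact key.div_const _
  refine ⟨part1, ?_⟩
  -- Part 2
  intro k
  have hmap : Tendsto (fun ρ : ℝ => 1 + α * (ρ - 1)) (𝓝[<] (1:ℝ)) (𝓝[<] (1:ℝ)) := by
    apply tendsto_nhdsWithin_of_tendsto_nhds_of_eventually_within
    · have : Tendsto (fun ρ : ℝ => 1 + α * (ρ - 1)) (𝓝 (1:ℝ)) (𝓝 (1 + α * (1 - 1))) := by
        exact (Continuous.add continuous_const
          (continuous_const.mul (continuous_id.sub continuous_const))).tendsto 1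
      simpa using this.mono_left nhdsWithin_le_nhds
    · filter_upwards [self_mem_nhdsWithin] with ρ (hρ : ρ < 1)
      show 1 + α * (ρ - 1) < 1
      nlinarith
  have hUcomp : Tendsto (fun ρ : ℝ => U (1 + α * (ρ - 1)) k) (𝓝[<] (1:ℝ)) (𝓝 (Ustd k)) :=
    (part1 k).comp hmap
  have hρ : Tendsto (fun ρ : ℝ => ρ) (𝓝[<] (1:ℝ)) (𝓝 (1:ℝ)) :=
    tendsto_id.mono_left nhdsWithin_le_nhds
  have := (tendsto_const_nhds (x := g) (f := 𝓝[<] (1:ℝ))).mul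
    (((tendsto_const_nhds (x := (1:ℝ))).add
      (((tendsto_const_nhds (x := α)).mul hρ).mul hUcomp)))
  simpa using this
end

section
/- Vertical fragmentation increases volatility: if sector i is split so that all network paths from any sector through i to consumers now pass through an additional intermediate sector j (the network upstream of i and downstream of j is unchanged), then output growth volatility weakly increases for every sector, and strictly increases for every sector r with a strictly positive Leontief-inverse entry ℓ_{ri} > 0 before the fragmentation. -/
/-- Vertical fragmentation increases volatility. A sector's
output-growth volatility is `(1 + αρ Σ_n w_n q_n) σ` where `q_n` is the share
of output at supply-chain distance `n` and the distance weights
`w_n = (1−ω^{n+1})/(1−ω)` are strictly increasing in `n`. Fragmentation of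
sector `i` shifts every path through `i` one step further from consumers:
the distance distribution `a + b` (with `b` the mass of paths through `i`)
becomes `a + b'` with `b'` the one-step right-shift of `b`. Volatility weakly
increases, and strictly increases for sectors with `Σ_n b_n > 0`
(i.e. `ℓ_{ri} > 0` before the fragmentation). -/
theorem vertical_fragmentation_increases_volatility
    (α ρ σ ω : ℝ) (hα : 0 < α) (hρ0 : 0 < ρ) (hρ1 : ρ < 1)
    (hω0 : 0 < ω) (hω1 : ω < 1) (hσ : 0 < σ)
    (w : ℕ → ℝ) (hw : ∀ n, w n = (1 - ω ^ (n + 1)) / (1 - ω))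
    (a b : ℕ → ℝ) (ha : ∀ n, 0 ≤ a n) (hb : ∀ n, 0 ≤ b n)
    (hsa : Summable a) (hsb : Summable b)
    (b' : ℕ → ℝ) (hb'0 : b' 0 = 0) (hb' : ∀ n, b' (n + 1) = b n)
    (vol : (ℕ → ℝ) → ℝ)
    (hvol : ∀ q, vol q = (1 + α * ρ * ∑' n : ℕ, w n * q n) * σ) :
    vol (fun n => a n + b n) ≤ vol (fun n => a n + b' n) ∧
    (0 < ∑' n : ℕ, b n →
      vol (fun n => a n + b n) < vol (fun n => a n + b' n)) := by
  have hω' : 0 < 1 - ω := by linarith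
  have hw0 : ∀ n, 0 ≤ w n := by
    intro n
    rw [hw]
    apply div_nonneg _ hω'.le
    have : ω ^ (n + 1) ≤ 1 := pow_le_one₀ hω0.le hω1.le
    linarith
  have hwB : ∀ n, w n ≤ (1 - ω)⁻¹ := by
    intro n
    rw [hw, div_le_iff₀ hω', inv_mul_cancel₀ hω'.ne']
    have : 0 < ω ^ (n + 1) := pow_pos hω0 _
    linarith
  have hwmono : ∀ n, w n < w (n + 1) := by
    intro n
    rw [hw, hw]
    have h1 : ω ^ (n + 1 + 1) < ω ^ (n + 1) := by
      calc ω ^ (n + 1 + 1) = ω ^ (n + 1) * ω := by ring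
      _ < ω ^ (n + 1) * 1 := by
          apply mul_lt_mul_of_pos_left hω1 (pow_pos hω0 _)
      _ = ω ^ (n + 1) := by ring
    apply (div_lt_div_iff_of_pos_right hω').mpr
    linarith
  have hb'nn : ∀ n, 0 ≤ b' n := by
    intro n
    cases n with
    | zero => rw [hb'0]
    | succ k => rw [hb']; exact hb k
  have hsb' : Summable b' := by
    rw [← summable_nat_add_iff 1]
    simpa [hb'] using hsb
  -- summability of weighted sums
  have key : ∀ (f : ℕ → ℝ), (∀ n, 0 ≤ f n) → Summable f → Summable (fun n => w n * f n) := by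
    intro f hf hsf
    apply Summable.of_nonneg_of_le (fun n => mul_nonneg (hw0 n) (hf n))
      (fun n => mul_le_mul_of_nonneg_right (hwB n) (hf n))
    exact hsf.mul_left _
  have hswa := key a ha hsa
  have hswb := key b hb hsb
  have hswb' := key b' hb'nn hsb'
  -- shift identity
  have hshift : (∑' n, w n * b' n) = ∑' n, w (n + 1) * b n := by
    rw [Summable.tsum_eq_zero_add hswb']
    simp [hb'0, hb']
  have hswb1 : Summable (fun n => w (n + 1) * b n) := by
    rw [← hshift] at *
    exact (summable_nat_add_iff 1).mpr hswb' |>.congr (by simp [hb'])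
  -- pointwise inequality
  have hle : ∀ n, w n * b n ≤ w (n + 1) * b n := fun n =>
    mul_le_mul_of_nonneg_right (hwmono n).le (hb n)
  have hsum_le : (∑' n, w n * b n) ≤ ∑' n, w n * b' n := by
    rw [hshift]
    exact Summable.tsum_le_tsum hle hswb hswb1
  have htsum_old : (∑' n, w n * (a n + b n)) = (∑' n, w n * a n) + ∑' n, w n * b n := by
    simp_rw [mul_add]
    exact Summable.tsum_add hswa hswb
  have htsum_new : (∑' n, w n * (a n + b' n)) = (∑' n, w n * a n) + ∑' n, w n * b' n := by
    simp_rw [mul_add]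
    exact Summable.tsum_add hswa hswb'
  have hc : 0 < α * ρ := mul_pos hα hρ0
  constructor
  · rw [hvol, hvol]
    apply mul_le_mul_of_nonneg_right _ hσ.le
    rw [htsum_old, htsum_new]
    nlinarith
  · intro hpos
    have hex : ∃ m, 0 < b m := by
      by_contra h
      push_neg at h
      have : ∀ n, b n = 0 := fun n => le_antisymm (h n) (hb n)
      simp [this] at hpos
    obtain ⟨m, hm⟩ := hex
    have hstrict : (∑' n, w n * b n) < ∑' n, w n * b' n := by
      rw [hshift]
      exact Summable.tsum_lt_tsum hle (mul_lt_mul_of_pos_right (hwmono m) hm) hswb hswb1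
    rw [hvol, hvol]
    apply mul_lt_mul_of_pos_right _ hσ
    rw [htsum_old, htsum_new]
    nlinarith
end

section
/- Suppose sectors r and s are downstream symmetric so that ξ^r_j = ξ^s_j for all destinations j. If 𝒰^r_j ≥ 𝒰^s_j for all j with strict inequality for some j where ξ^r_j Var(η_{j,t}) > 0, then Var(Δlog Y^r_t) > Var(Δlog Y^s_t). -/
/-- If sectors r and s are downstream symmetric (identical
exposure shares `ξ_j`), `𝒰^r_j ≥ 𝒰^s_j` for all j with strict inequality at
some j where `ξ_j·Var(η_j) > 0`, then r's output-growth variance strictly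
exceeds s's, where `Var(Δlog Y) = Σ_j (1+αρ𝒰_j)² ξ_j² Var(η_j)`. -/
theorem upstreamness_and_volatility_multiple_destinations
    {J : ℕ}
    (α ρ : ℝ) (hα : 0 < α) (hρ : 0 < ρ)
    (Ur Us ξ σ2 : Fin J → ℝ)
    (hU1 : ∀ j, 1 ≤ Us j) (hUU : ∀ j, Us j ≤ Ur j)
    (hξ : ∀ j, 0 ≤ ξ j) (hσ2 : ∀ j, 0 ≤ σ2 j)
    (hstrict : ∃ j, Us j < Ur j ∧ 0 < ξ j * σ2 j)
    (VarYr VarYs : ℝ)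
    (hVr : VarYr = ∑ j, (1 + α * ρ * Ur j) ^ 2 * (ξ j) ^ 2 * σ2 j)
    (hVs : VarYs = ∑ j, (1 + α * ρ * Us j) ^ 2 * (ξ j) ^ 2 * σ2 j) :
    VarYr > VarYs := by
  subst hVr hVs
  obtain ⟨j0, hlt, hpos⟩ := hstrict
  have hbase : ∀ j, (0:ℝ) ≤ 1 + α * ρ * Us j := fun j => by nlinarith [hU1 j, mul_pos hα hρ]
  apply Finset.sum_lt_sum
  · intro j _
    have h1 : 1 + α * ρ * Us j ≤ 1 + α * ρ * Ur j := by nlinarith [hUU j, mul_pos hα hρ]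
    have := pow_le_pow_left₀ (hbase j) h1 2
    have := mul_nonneg (sq_nonneg (ξ j)) (hσ2 j)
    nlinarith
  · refine ⟨j0, Finset.mem_univ j0, ?_⟩
    have hξp : 0 < ξ j0 := lt_of_le_of_ne (hξ j0) (by
      intro h; rw [← h] at hpos; simp at hpos)
    have hσp : 0 < σ2 j0 := by nlinarith
    have h1 : 1 + α * ρ * Us j0 < 1 + α * ρ * Ur j0 := by nlinarith [mul_pos hα hρ]
    have hsq : (1 + α * ρ * Us j0)^2 < (1 + α * ρ * Ur j0)^2 :=
      pow_lt_pow_left₀ h1 (hbase j0) (by norm_num)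
    nlinarith [mul_pos (pow_pos hξp 2) hσp, hsq]
end
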